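/- Lat ℳ(λ) = Lat {M_φ̂ : φ̂ ∈ 𝓜₀(λ)}; that is, a closed subspace of ℓ²(V) is invariant under every bounded multiplication operator M_φ̂ with φ̂ ∈ 𝓜(λ) if and only if it is invariant under every M_φ̂ with finitely supported φ̂. -/

import Mathlib

open Filter Finset Classical

set_option linter.unusedVariables false
open scoped ComplexConjugate ENNReal

noncomputable section
attribute [local instance] Classical.propDecidable

/-- A countably infinite rooted directed tree, encoded by the parent function
(with the convention `par root = root`) and the depth function `|·|`. -/
structure DirTree (V : Type*) where
  root : V
  par : V → V
  depth : V → ℕ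
  par_root : par root = root
  depth_eq_zero : ∀ v, depth v = 0 ↔ v = root
  depth_par : ∀ v, v ≠ root → depth (par v) + 1 = depth v

variable {V : Type*}

/-- The tree is leafless: every vertex has a child. -/
def DirTree.Leafless (T : DirTree V) : Prop :=
  ∀ u : V, ∃ v : V, v ≠ T.root ∧ T.par v = u

/-- `wProd T lam v k = λ_{par^k(v)|v}`, the product of the weights along `k` steps up from `v`. -/
def wProd (T : DirTree V) (lam : V → ℂ) (v : V) (k : ℕ) : ℂ :=
  ∏ n ∈ Finset.range k, lam (T.par^[n] v)

/-- `(Γ_φ f)(v) = ∑_{k=0}^{|v|} λ_{par^k(v)|v} φ(k) f(par^k(v))`. -/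
def Gamma (T : DirTree V) (lam : V → ℂ) (φ : ℕ → ℂ) (f : V → ℂ) (v : V) : ℂ :=
  ∑ k ∈ Finset.range (T.depth v + 1), wProd T lam v k * φ k * f (T.par^[k] v)

/-- `S` is the weighted shift `S_λ` on `ℓ²(V)`. -/
def IsShift (T : DirTree V) (lam : V → ℝ)
    (S : lp (fun _ : V => ℂ) 2 →L[ℂ] lp (fun _ : V => ℂ) 2) : Prop :=
  ∀ f : lp (fun _ : V => ℂ) 2, ∀ v : V,
    S f v = if v = T.root then 0 else (lam v : ℂ) * f (T.par v)

/-- `M` is the (bounded, everywhere defined) multiplication operator `M_φ` with symbol `φ`;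
the existence of such an `M` is equivalent to `φ ∈ 𝓜(λ)`. -/
def IsMultOp (T : DirTree V) (lam : V → ℝ) (φ : ℕ → ℂ)
    (M : lp (fun _ : V => ℂ) 2 →L[ℂ] lp (fun _ : V => ℂ) 2) : Prop :=
  ∀ f : lp (fun _ : V => ℂ) 2, ∀ v : V,
    M f v = Gamma T (fun u => (lam u : ℂ)) φ (⇑f) v

/-!
Conjugating by the unitary modulations `U_θ e_v = e^{2πi|v|θ} e_v` rotates the symbol of a
multiplier: `U_θ M_φ U_θ⁻¹ = M_{φ_θ}` with `φ_θ(k) = e^{2πikθ} φ(k)`. Hence the `j`-th Fourier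
coefficient of the continuous map `θ ↦ U_θ M_φ U_θ⁻¹ f` is `φ(j) S^j f` (and `0` for `j < 0`).
If `g ⊥ S^j f` for all `j`, the continuous function `θ ↦ ⟪g, U_θ M_φ U_θ⁻¹ f⟫` therefore has
vanishing Fourier coefficients, so it vanishes, and its value at `θ = 0` is `⟪g, M_φ f⟫`.
Since `S^j` is the multiplier with symbol `δ_j`, the theorem follows from `K = Kᗮᗮ`.
-/

notation "ℓ²(" V ")" => lp (fun _ : V => ℂ) 2

namespace DirTree

variable (T : DirTree V)

lemma depth_iterate_par (v : V) (n : ℕ) : T.depth (T.par^[n] v) = T.depth v - n := by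
  induction n with
  | zero => simp
  | succ n ih =>
    rw [Function.iterate_succ_apply']
    by_cases h : T.par^[n] v = T.root
    · rw [h, T.par_root, (T.depth_eq_zero _).2 rfl]
      rw [h, (T.depth_eq_zero _).2 rfl] at ih
      omega
    · have := T.depth_par _ h
      omega

lemma iterate_par_eq_root_iff (v : V) (n : ℕ) : T.par^[n] v = T.root ↔ T.depth v ≤ n := by
  rw [← T.depth_eq_zero, depth_iterate_par]
  omega

end DirTree

lemma Gamma_smul (T : DirTree V) (lam : V → ℂ) (c : ℂ) (φ : ℕ → ℂ) (f : V → ℂ) (v : V) :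
    Gamma T lam (c • φ) f v = c * Gamma T lam φ f v := by
  simp only [Gamma, Finset.mul_sum, Pi.smul_apply, smul_eq_mul]
  exact Finset.sum_congr rfl fun _ _ => by ring

lemma Gamma_zero (T : DirTree V) (lam : V → ℂ) (f : V → ℂ) (v : V) :
    Gamma T lam 0 f v = 0 := by
  simp [Gamma]

namespace IsShift

variable {T : DirTree V} {lam : V → ℝ} {S : ℓ²(V) →L[ℂ] ℓ²(V)}

lemma pow_apply (hS : IsShift T lam S) (k : ℕ) (f : ℓ²(V)) (v : V) :
    (S ^ k) f v = if T.depth v < k then 0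
      else wProd T (fun u => (lam u : ℂ)) v k * f (T.par^[k] v) := by
  induction k generalizing f with
  | zero => simp [wProd]
  | succ k ih =>
    rw [pow_succ, mul_apply_eq_comp, ih, hS]
    by_cases hk : T.depth v < k
    · rw [if_pos hk, if_pos (by omega)]
    by_cases hroot : T.par^[k] v = T.root
    · have : T.depth v ≤ k := (T.iterate_par_eq_root_iff v k).1 hroot
      rw [if_neg hk, if_pos hroot, if_pos (by omega), mul_zero]
    · have : ¬ T.depth v ≤ k := fun h => hroot ((T.iterate_par_eq_root_iff v k).2 h)
      rw [if_neg hk, if_neg hroot, if_neg (by omega), ← Function.iterate_succ_apply' T.par,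
        wProd, wProd, Finset.prod_range_succ]
      ring

lemma isMultOp_pow (hS : IsShift T lam S) (k : ℕ) :
    IsMultOp T lam (fun m => if m = k then 1 else 0) (S ^ k) := by
  intro f v
  simp only [hS.pow_apply, Gamma, mul_ite, mul_one, mul_zero, ite_mul, zero_mul,
    Finset.sum_ite_eq', Finset.mem_range]
  split_ifs <;> first | rfl | omega

end IsShift

@[simp] lemma norm_fourier_apply {T : ℝ} (n : ℤ) (θ : AddCircle T) : ‖fourier n θ‖ = 1 :=
  Circle.norm_coe _

lemma fourier_apply_neg {T : ℝ} (n : ℤ) (θ : AddCircle T) : fourier n (-θ) = fourier (-n) θ := by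
  rw [fourier_apply, fourier_apply, smul_neg, neg_smul]

lemma fourier_mul_fourier_sub_apply {T : ℝ} {d k : ℕ} (hk : k ≤ d) (θ : AddCircle T) :
    fourier d θ * fourier ((d - k : ℕ) : ℤ) (-θ) = fourier k θ := by
  rw [fourier_apply_neg, ← fourier_add]
  congr 2
  push_cast [Nat.cast_sub hk]
  ring

open MeasureTheory AddCircle

section FourierCoeff

variable {P : ℝ} [Fact (0 < P)]

lemma ContinuousLinearMap.fourierCoeff_comp {E F : Type*} [NormedAddCommGroup E] [NormedSpace ℂ E]
    [CompleteSpace E] [NormedAddCommGroup F] [NormedSpace ℂ F] [CompleteSpace F]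
    (L : E →L[ℂ] F) {f : AddCircle P → E} (hf : Integrable f haarAddCircle) (n : ℤ) :
    fourierCoeff (fun t => L (f t)) n = L (fourierCoeff f n) := by
  simp only [fourierCoeff, ← L.map_smul]
  exact L.integral_comp_comm (hf.fourier_smul (-n))

lemma fourierCoeff_Gamma_fourier_mul (T : DirTree V) (lam : V → ℂ) (φ : ℕ → ℂ) (f : V → ℂ)
    (v : V) (j : ℤ) :
    fourierCoeff (fun θ : AddCircle P => Gamma T lam (fun k => fourier k θ * φ k) f v) j
      = Gamma T lam (fun k => if (k : ℤ) = j then φ k else 0) f v := by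
  have hsum : (fun θ : AddCircle P => Gamma T lam (fun k => fourier k θ * φ k) f v)
      = ∑ k ∈ Finset.range (T.depth v + 1),
          (wProd T lam v k * φ k * f (T.par^[k] v)) • ⇑(fourier (T := P) k) := by
    ext θ
    simp only [Gamma, Finset.sum_apply, Pi.smul_apply, smul_eq_mul]
    exact Finset.sum_congr rfl fun k _ => by ring
  rw [hsum, fourierCoeff.sum _ _ fun k _ =>
    ((map_continuous _).integrable_of_hasCompactSupport (.of_compactSpace _)).smul _]
  simp only [Finset.sum_apply, fourierCoeff.const_smul, fourierCoeff_fourier, Gamma]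
  refine Finset.sum_congr rfl fun k _ => ?_
  simp only [Pi.single_apply, smul_eq_mul, eq_comm (a := j)]
  split_ifs <;> ring

lemma ContinuousMap.eq_zero_of_fourierCoeff_eq_zero
    {f : C(AddCircle P, ℂ)} (hf : ∀ n, fourierCoeff f n = 0) : f = 0 := by
  have hzero : fourierCoeff f = 0 := funext hf
  have h := hasSum_fourier_series_of_summable (f := f) (hzero ▸ summable_zero)
  simp only [hf, zero_smul] at h
  exact h.unique hasSum_zero

end FourierCoeff

section L2

variable {ι : Type*} {E : ι → Type*} [∀ i, NormedAddCommGroup (E i)]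

lemma lp.norm_sq_eq_tsum (x : lp E 2) : ‖x‖ ^ 2 = ∑' i, ‖x i‖ ^ 2 := by
  simpa using lp.norm_rpow_eq_tsum (p := 2) (by norm_num) x

lemma lp.summable_norm_sq (x : lp E 2) : Summable fun i => ‖x i‖ ^ 2 := by
  simpa using (lp.memℓp x).summable (p := 2) (by norm_num)

end L2

section Modulation

variable (T : DirTree V)

def modulation (θ : AddCircle (1 : ℝ)) : ℓ²(V) →ₗᵢ[ℂ] ℓ²(V) where
  toFun x := ⟨fun v => fourier (T.depth v) θ * x v,
    (lp.memℓp x).mono' fun v => by rw [norm_mul, norm_fourier_apply, one_mul]⟩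
  map_add' x y := by ext v; simp only [lp.coeFn_add, Pi.add_apply, mul_add]
  map_smul' c x := by
    ext v
    simp only [lp.coeFn_smul, Pi.smul_apply, smul_eq_mul]
    exact mul_left_comm _ _ _
  norm_map' x := le_antisymm (lp.norm_mono two_ne_zero fun v => by simp [Circle.norm_coe])
    (lp.norm_mono two_ne_zero fun v => by simp [Circle.norm_coe])

@[simp] lemma modulation_apply (θ : AddCircle (1 : ℝ)) (x : ℓ²(V)) (v : V) :
    modulation T θ x v = fourier (T.depth v) θ * x v := rfl

@[simp] lemma modulation_zero (x : ℓ²(V)) : modulation T 0 x = x := by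
  ext v; simp

lemma continuous_modulation_apply (x : ℓ²(V)) : Continuous fun θ => modulation T θ x := by
  refine continuous_iff_continuousAt.2 fun θ₀ => ?_
  rw [ContinuousAt, tendsto_iff_norm_sub_tendsto_zero]
  set D : AddCircle (1 : ℝ) → ℝ :=
    fun θ => ∑' v, ‖(fourier (T.depth v) θ - fourier (T.depth v) θ₀) * x v‖ ^ 2
  have hD : Continuous D := by
    refine continuous_tsum (fun v => by fun_prop) ((lp.summable_norm_sq x).mul_left (2 ^ 2))
      fun v θ => ?_
    have : ‖fourier (T.depth v) θ - fourier (T.depth v) θ₀‖ ≤ 2 :=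
      (norm_sub_le _ _).trans (by rw [norm_fourier_apply, norm_fourier_apply]; norm_num)
    rw [Real.norm_of_nonneg (by positivity), norm_mul, mul_pow]
    gcongr
  have hnorm : ∀ θ, ‖modulation T θ x - modulation T θ₀ x‖ = Real.sqrt (D θ) := fun θ => by
    rw [← Real.sqrt_sq (norm_nonneg _), lp.norm_sq_eq_tsum]
    simp only [D, lp.coeFn_sub, Pi.sub_apply, modulation_apply, sub_mul]
  have hD₀ : D θ₀ = 0 := by simp [D]
  have h := (Real.continuous_sqrt.comp hD).tendsto θ₀
  rw [Function.comp_apply, hD₀, Real.sqrt_zero] at h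
  exact h.congr fun θ => (hnorm θ).symm

lemma continuous_modulation :
    Continuous fun p : AddCircle (1 : ℝ) × ℓ²(V) => modulation T p.1 p.2 :=
  continuous_prod_of_continuous_lipschitzWith' _ 1 (fun θ => (modulation T θ).lipschitz)
    (continuous_modulation_apply T)

end Modulation

def conjModulation (T : DirTree V) (M : ℓ²(V) →L[ℂ] ℓ²(V)) (θ : AddCircle (1 : ℝ)) :
    ℓ²(V) →L[ℂ] ℓ²(V) :=
  (modulation T θ).toContinuousLinearMap ∘L M ∘L (modulation T (-θ)).toContinuousLinearMap

lemma continuous_conjModulation_apply (T : DirTree V) (M : ℓ²(V) →L[ℂ] ℓ²(V)) (f : ℓ²(V)) :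
    Continuous fun θ => conjModulation T M θ f :=
  (continuous_modulation T).comp <| continuous_id.prodMk <|
    M.continuous.comp <| (continuous_modulation T).comp <|
      continuous_neg.prodMk (continuous_const (y := f))

@[simp] lemma conjModulation_zero (T : DirTree V) (M : ℓ²(V) →L[ℂ] ℓ²(V)) (f : ℓ²(V)) :
    conjModulation T M 0 f = M f := by
  simp [conjModulation]

open scoped InnerProductSpace

namespace IsMultOp

variable {T : DirTree V} {lam : V → ℝ} {φ : ℕ → ℂ} {S M : ℓ²(V) →L[ℂ] ℓ²(V)}

lemma isMultOp_conjModulation (hM : IsMultOp T lam φ M) (θ : AddCircle (1 : ℝ)) :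
    IsMultOp T lam (fun k => fourier k θ * φ k) (conjModulation T M θ) := by
  intro f v
  simp only [conjModulation, ContinuousLinearMap.comp_apply,
    LinearIsometry.coe_toContinuousLinearMap, modulation_apply, hM _ v, Gamma, Finset.mul_sum]
  refine Finset.sum_congr rfl fun k hk => ?_
  have hk : k ≤ T.depth v := Nat.lt_succ_iff.1 (Finset.mem_range.1 hk)
  rw [T.depth_iterate_par, ← fourier_mul_fourier_sub_apply hk θ]
  ring

lemma fourierCoeff_conjModulation_apply (hM : IsMultOp T lam φ M) (f : ℓ²(V)) (j : ℤ) (v : V) :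
    fourierCoeff (fun θ => conjModulation T M θ f) j v
      = Gamma T (fun u => (lam u : ℂ)) (fun k => if (k : ℤ) = j then φ k else 0) f v := by
  have hint : Integrable (fun θ => conjModulation T M θ f) haarAddCircle :=
    (continuous_conjModulation_apply T M f).integrable_of_hasCompactSupport (.of_compactSpace _)
  rw [← fourierCoeff_Gamma_fourier_mul (P := 1),
    ← funext fun θ => hM.isMultOp_conjModulation θ f v]
  exact ((lp.evalCLM ℂ (fun _ : V => ℂ) 2 v).fourierCoeff_comp hint j).symm

lemma fourierCoeff_conjModulation_natCast (hS : IsShift T lam S) (hM : IsMultOp T lam φ M)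
    (f : ℓ²(V)) (n : ℕ) : fourierCoeff (fun θ => conjModulation T M θ f) n = φ n • (S ^ n) f := by
  have hsymbol : (fun k : ℕ => if (k : ℤ) = n then φ k else 0)
      = φ n • fun k => if k = n then 1 else 0 := by
    ext k
    by_cases hk : k = n <;> simp [hk]
  ext v
  rw [hM.fourierCoeff_conjModulation_apply, hsymbol, Gamma_smul, ← hS.isMultOp_pow]
  rfl

lemma fourierCoeff_conjModulation_of_neg (hM : IsMultOp T lam φ M) (f : ℓ²(V)) {j : ℤ}
    (hj : j < 0) : fourierCoeff (fun θ => conjModulation T M θ f) j = 0 := by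
  have hsymbol : (fun k : ℕ => if (k : ℤ) = j then φ k else 0) = 0 :=
    funext fun k => if_neg (by omega)
  ext v
  rw [hM.fourierCoeff_conjModulation_apply, hsymbol, Gamma_zero]
  rfl

lemma inner_eq_zero_of_forall_inner_pow_eq_zero (hS : IsShift T lam S)
    (hM : IsMultOp T lam φ M) {f g : ℓ²(V)} (h : ∀ n : ℕ, ⟪g, (S ^ n) f⟫_ℂ = 0) :
    ⟪g, M f⟫_ℂ = 0 := by
  have hC := continuous_conjModulation_apply T M f
  have hcoeff (j : ℤ) : fourierCoeff (fun θ => ⟪g, conjModulation T M θ f⟫_ℂ) j = 0 := by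
    change fourierCoeff (fun θ => innerSL ℂ g (conjModulation T M θ f)) j = 0
    rw [(innerSL ℂ g).fourierCoeff_comp
      (hC.integrable_of_hasCompactSupport (.of_compactSpace _)) j]
    rcases le_or_gt 0 j with hj | hj
    · lift j to ℕ using hj
      rw [hM.fourierCoeff_conjModulation_natCast hS, innerSL_apply_apply, inner_smul_right, h,
        mul_zero]
    · rw [hM.fourierCoeff_conjModulation_of_neg f hj, map_zero]
  let H : C(AddCircle (1 : ℝ), ℂ) :=
    ⟨fun θ => ⟪g, conjModulation T M θ f⟫_ℂ, continuous_const.inner hC⟩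
  simpa [H] using DFunLike.congr_fun (ContinuousMap.eq_zero_of_fourierCoeff_eq_zero
    (f := H) hcoeff) 0

lemma mem_of_forall_pow_mem (hS : IsShift T lam S) (hM : IsMultOp T lam φ M)
    {K : Submodule ℂ ℓ²(V)} (hK : IsClosed (K : Set ℓ²(V))) {f : ℓ²(V)}
    (hf : ∀ n : ℕ, (S ^ n) f ∈ K) : M f ∈ K := by
  have : CompleteSpace K := hK.completeSpace_coe
  rw [← K.orthogonal_orthogonal, Submodule.mem_orthogonal]
  exact fun g hg => hM.inner_eq_zero_of_forall_inner_pow_eq_zero hS fun n =>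
    K.inner_left_of_mem_orthogonal (hf n) hg

end IsMultOp

theorem stmt7_general (T : DirTree V)
    (lam : V → ℝ)
    (S : lp (fun _ : V => ℂ) 2 →L[ℂ] lp (fun _ : V => ℂ) 2) (hS : IsShift T lam S) :
    ∀ K : Submodule ℂ (lp (fun _ : V => ℂ) 2), IsClosed (K : Set (lp (fun _ : V => ℂ) 2)) →
      ((∀ φ : ℕ → ℂ, ∀ M : lp (fun _ : V => ℂ) 2 →L[ℂ] lp (fun _ : V => ℂ) 2,
          IsMultOp T lam φ M → ∀ f ∈ K, M f ∈ K) ↔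
        (∀ φ : ℕ → ℂ, ∀ M : lp (fun _ : V => ℂ) 2 →L[ℂ] lp (fun _ : V => ℂ) 2,
          (Function.support φ).Finite → IsMultOp T lam φ M → ∀ f ∈ K, M f ∈ K)) := by
  intro K hK
  refine ⟨fun H φ M _ hM => H φ M hM, fun H φ M hM f hf => hM.mem_of_forall_pow_mem hS hK ?_⟩
  intro n
  have hfinite : (Function.support fun m => if m = n then (1 : ℂ) else 0).Finite :=
    (Set.finite_singleton n).subset fun m hm => of_not_not fun hmn => hm (if_neg hmn)
  exact H _ (S ^ n) hfinite (hS.isMultOp_pow n) f hf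

/-- Proposition, first part: `Lat ℳ(λ) = Lat {M_φ : φ ∈ 𝓜₀(λ)}`:
a closed subspace is invariant under all bounded multiplication operators iff it is
invariant under all multiplication operators with finitely supported symbols. -/
theorem stmt7 [Countable V] [Infinite V] (T : DirTree V) (hTl : T.Leafless)
    (lam : V → ℝ) (hlam : ∀ v, v ≠ T.root → 0 < lam v)
    (S : lp (fun _ : V => ℂ) 2 →L[ℂ] lp (fun _ : V => ℂ) 2) (hS : IsShift T lam S) :
    ∀ K : Submodule ℂ (lp (fun _ : V => ℂ) 2), IsClosed (K : Set (lp (fun _ : V => ℂ) 2)) →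
      ((∀ φ : ℕ → ℂ, ∀ M : lp (fun _ : V => ℂ) 2 →L[ℂ] lp (fun _ : V => ℂ) 2,
          IsMultOp T lam φ M → ∀ f ∈ K, M f ∈ K) ↔
        (∀ φ : ℕ → ℂ, ∀ M : lp (fun _ : V => ℂ) 2 →L[ℂ] lp (fun _ : V => ℂ) 2,
          (Function.support φ).Finite → IsMultOp T lam φ M → ∀ f ∈ K, M f ∈ K)) :=
  stmt7_general T lam S hS
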